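/- Let U ⊆ ℂ be a connected open set, let I ⊆ U ∩ ℝ be a nonempty open interval, let n ≥ 1, and let G : U → ℂ be holomorphic with G real-valued on I. Suppose that for every connected open V ⊆ U with I ⊆ V and all holomorphic h₁,…,h_k : V → ℂ such that each hᵢ′ is algebraic over (z, h₁,…,h_k) on V (i.e., some nonzero complex polynomial vanishes identically at (z, h₁(z),…,h_k(z), hᵢ′(z)) on V), either G, G′,…,G^{(n-1)} are algebraically independent over (z, h₁,…,h_k) on V, or G is algebraic over (z, h₁,…,h_k) on V. Then the restriction g = G|_I : I → ℝ satisfies the strong-minimality dichotomy of order n on I. (This is the complex-to-real transfer step in the proof of Theorem A: strong minimality of the differential equation over ℂ yields the real dichotomy for the restricted function.) -/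

import Mathlib

open MvPolynomial

noncomputable section

/-- `g₁,…,g_r` are algebraically dependent over `(x, h₁,…,h_k)` on `I ⊆ ℝ`. -/
def AlgDepOn (I : Set ℝ) {k r : ℕ} (h : Fin k → ℝ → ℝ) (g : Fin r → ℝ → ℝ) : Prop :=
  ∃ P : MvPolynomial (Fin (k + 1 + r)) ℝ, P ≠ 0 ∧
    ∀ x ∈ I, MvPolynomial.eval
      (Fin.append (Fin.cons x fun j => h j x) fun j => g j x) P = 0

/-- `g` is algebraic over `(x, h₁,…,h_k)` on `I ⊆ ℝ`. -/
def AlgebraicOver (I : Set ℝ) {k : ℕ} (h : Fin k → ℝ → ℝ) (g : ℝ → ℝ) : Prop :=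
  AlgDepOn I h ![g]

/-- `g` satisfies the strong-minimality dichotomy of order `n` on `I`. -/
def StrongMinDichotomy (I : Set ℝ) (n : ℕ) (g : ℝ → ℝ) : Prop :=
  ∀ (k : ℕ) (h : Fin k → ℝ → ℝ),
    (∀ i, AnalyticOnNhd ℝ (h i) I) →
    (∀ i, AlgebraicOver I h (deriv (h i))) →
    (¬ AlgDepOn I h fun j : Fin n => deriv^[(j : ℕ)] g) ∨ AlgebraicOver I h g

/-- `g₁,…,g_r` are algebraically dependent over `(z, h₁,…,h_k)` on `V ⊆ ℂ`. -/
def CAlgDepOn (V : Set ℂ) {k r : ℕ} (h : Fin k → ℂ → ℂ) (g : Fin r → ℂ → ℂ) : Prop :=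
  ∃ P : MvPolynomial (Fin (k + 1 + r)) ℂ, P ≠ 0 ∧
    ∀ z ∈ V, MvPolynomial.eval
      (Fin.append (Fin.cons z fun j => h j z) fun j => g j z) P = 0

/-- `g` is algebraic over `(z, h₁,…,h_k)` on `V ⊆ ℂ`. -/
def CAlgebraicOver (V : Set ℂ) {k : ℕ} (h : Fin k → ℂ → ℂ) (g : ℂ → ℂ) : Prop :=
  CAlgDepOn V h ![g]

/-! Each real-analytic `hᵢ` is the restriction of a holomorphic function: complexify its local
power series and glue the pieces with the identity theorem. On a connected open `V ⊆ U`
containing `I` on which all these extensions live, a polynomial relation between real-analytic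
functions on `I` is the same thing as a polynomial relation between their holomorphic extensions
on `V`: a real relation, read over `ℂ`, vanishes on `I` and hence on `V` by the identity theorem,
and conversely the real or the imaginary part of a nonzero complex relation is a nonzero real
one. Since differentiation commutes with restriction to `I`, both the hypotheses on the `hᵢ` and
the two alternatives of the dichotomy transfer between `I` and `V`. -/

open Set Filter Topology FormalMultilinearSeries
open scoped ENNReal

namespace MvPolynomial

variable {σ : Type*}

def rePart (P : MvPolynomial σ ℂ) : MvPolynomial σ ℝ :=
  AddMonoidAlgebra.map Complex.reAddGroupHom P

def imPart (P : MvPolynomial σ ℂ) : MvPolynomial σ ℝ :=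
  AddMonoidAlgebra.map Complex.imAddGroupHom P

theorem map_rePart_add_C_I_mul_map_imPart (P : MvPolynomial σ ℂ) :
    map Complex.ofRealHom P.rePart + C Complex.I * map Complex.ofRealHom P.imPart = P := by
  ext d
  simp [rePart, imPart, coeff_map, coeff_C_mul, mul_comm Complex.I]

theorem eval_map_ofRealHom (P : MvPolynomial σ ℝ) (v : σ → ℝ) :
    eval (fun i => (v i : ℂ)) (map Complex.ofRealHom P) = eval v P := by
  rw [eval_map]
  exact (eval₂_comp Complex.ofRealHom v P).symm

theorem exists_ne_zero_eval_eq_zero_of_ofReal {s : Set (σ → ℝ)} {P : MvPolynomial σ ℂ}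
    (hP : P ≠ 0) (hs : ∀ v ∈ s, eval (fun i => (v i : ℂ)) P = 0) :
    ∃ Q : MvPolynomial σ ℝ, Q ≠ 0 ∧ ∀ v ∈ s, eval v Q = 0 := by
  have hparts : ∀ v ∈ s, eval v P.rePart = 0 ∧ eval v P.imPart = 0 := by
    intro v hv
    have hPv := hs v hv
    rw [← map_rePart_add_C_I_mul_map_imPart P] at hPv
    simp only [eval_add, eval_mul, eval_C, eval_map_ofRealHom] at hPv
    exact ⟨by simpa using congrArg Complex.re hPv, by simpa using congrArg Complex.im hPv⟩
  by_cases hre : P.rePart = 0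
  · refine ⟨P.imPart, fun him => hP ?_, fun v hv => (hparts v hv).2⟩
    rw [← map_rePart_add_C_I_mul_map_imPart P, hre, him]
    simp
  · exact ⟨P.rePart, hre, fun v hv => (hparts v hv).1⟩

end MvPolynomial

theorem Complex.tendsto_ofReal_nhdsNE (t : ℝ) :
    Tendsto (fun s : ℝ => (s : ℂ)) (𝓝[≠] t) (𝓝[≠] (t : ℂ)) :=
  (Complex.continuous_ofReal.tendsto t).inf
    (tendsto_principal_principal.2 fun _ hs => by simpa using hs)

theorem AnalyticOnNhd.eqOn_of_preconnected_of_eventually_ofReal_eq {E : Type*}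
    [NormedAddCommGroup E] [NormedSpace ℂ E] {f g : ℂ → E} {V : Set ℂ}
    (hf : AnalyticOnNhd ℂ f V) (hg : AnalyticOnNhd ℂ g V) (hV : IsPreconnected V) {t₀ : ℝ}
    (ht₀ : (t₀ : ℂ) ∈ V) (hfg : ∀ᶠ s : ℝ in 𝓝 t₀, f s = g s) : EqOn f g V :=
  hf.eqOn_of_preconnected_of_frequently_eq hg hV ht₀
    ((Complex.tendsto_ofReal_nhdsNE t₀).frequently (hfg.filter_mono nhdsWithin_le_nhds).frequently)

theorem deriv_eq_ofReal_deriv_of_eventuallyEq {F : ℂ → ℂ} {f : ℝ → ℝ} {t : ℝ}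
    (hF : DifferentiableAt ℂ F t) (hFf : ∀ᶠ s : ℝ in 𝓝 t, F s = f s) :
    deriv F t = ((deriv f t : ℝ) : ℂ) := by
  have hf : HasDerivAt f (deriv F t).re t :=
    hF.hasDerivAt.real_of_complex.congr_of_eventuallyEq (hFf.mono fun s hs => by simp [hs])
  rw [hf.deriv]
  exact hF.hasDerivAt.comp_ofReal.unique (hf.ofReal_comp.congr_of_eventuallyEq hFf)

theorem iterate_deriv_eq_ofReal_iterate_deriv {U : Set ℂ} {F : ℂ → ℂ}
    (hF : AnalyticOnNhd ℂ F U) {S : Set ℝ} (hS : IsOpen S) (hSU : ∀ t ∈ S, (t : ℂ) ∈ U)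
    {f : ℝ → ℝ} (hFf : ∀ t ∈ S, F t = f t) (n : ℕ) :
    ∀ t ∈ S, deriv^[n] F t = ((deriv^[n] f t : ℝ) : ℂ) := by
  induction n with
  | zero => exact hFf
  | succ n ih =>
    intro t ht
    simp only [Function.iterate_succ_apply']
    exact deriv_eq_ofReal_deriv_of_eventuallyEq
      ((hF.iterated_deriv n) t (hSU t ht)).differentiableAt (eventually_of_mem (hS.mem_nhds ht) ih)

theorem HasFPowerSeriesOnBall.exists_complex_extension {f : ℝ → ℝ}
    {p : FormalMultilinearSeries ℝ ℝ ℝ} {x : ℝ} {r : ℝ≥0∞}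
    (hf : HasFPowerSeriesOnBall f p x r) :
    ∃ F : ℂ → ℂ, AnalyticOnNhd ℂ F (Metric.eball (x : ℂ) r) ∧
      ∀ s : ℝ, (s : ℂ) ∈ Metric.eball (x : ℂ) r → F s = f s := by
  set q : FormalMultilinearSeries ℂ ℂ ℂ := ofScalars ℂ fun n => (p.coeff n : ℂ)
  have hq : q.radius = p.radius := by
    simp only [radius, q, ofScalars_norm, Complex.norm_real, ← p.norm_apply_eq_norm_coef]
  have hF : HasFPowerSeriesOnBall (fun z => q.sum (z - x)) q x r := by
    simpa using ((q.hasFPowerSeriesOnBall (hq ▸ hf.r_pos.trans_le hf.r_le)).mono hf.r_pos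
      (hq ▸ hf.r_le)).comp_sub (x : ℂ)
  refine ⟨_, hF.analyticOnNhd, fun s hs => ?_⟩
  have hsC : (s : ℂ) - x ∈ Metric.eball (0 : ℂ) r := by simpa [edist_eq_enorm_sub] using hs
  have hsR : s - x ∈ Metric.eball (0 : ℝ) r := by
    simpa [edist_eq_enorm_sub, ← Complex.ofReal_sub, ← ofReal_norm] using hs
  have hreal := Complex.ofRealCLM.hasSum (hf.hasSum hsR)
  have hcomplex := hF.hasSum hsC
  rw [add_sub_cancel] at hreal hcomplex
  refine hcomplex.unique (hreal.congr_fun fun n => ?_)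
  simp [q, p.apply_eq_pow_smul_coeff]

theorem Complex.edist_ofReal_re_le (z : ℂ) (x : ℝ) : edist (z.re : ℂ) x ≤ edist z x := by
  simp only [edist_dist, Complex.dist_eq]
  gcongr
  simpa [← Complex.ofReal_sub] using Complex.abs_re_le_norm (z - x)

/-- Two balls centred on `ℝ` that meet also meet on `ℝ`, at the real part of a common point. -/
theorem eqOn_inter_eball_of_ofReal_eq {x y : ℝ} {r r' : ℝ≥0∞} {F₁ F₂ : ℂ → ℂ}
    (h₁ : AnalyticOnNhd ℂ F₁ (Metric.eball (x : ℂ) r))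
    (h₂ : AnalyticOnNhd ℂ F₂ (Metric.eball (y : ℂ) r'))
    (h : ∀ s : ℝ, (s : ℂ) ∈ Metric.eball (x : ℂ) r ∩ Metric.eball (y : ℂ) r' → F₁ s = F₂ s) :
    EqOn F₁ F₂ (Metric.eball (x : ℂ) r ∩ Metric.eball (y : ℂ) r') := by
  intro z hz
  have hre : ((z.re : ℝ) : ℂ) ∈ Metric.eball (x : ℂ) r ∩ Metric.eball (y : ℂ) r' :=
    ⟨(Complex.edist_ofReal_re_le z x).trans_lt hz.1,
      (Complex.edist_ofReal_re_le z y).trans_lt hz.2⟩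
  refine (h₁.mono inter_subset_left).eqOn_of_preconnected_of_eventually_ofReal_eq
    (h₂.mono inter_subset_right) ((convex_eball _ _).inter (convex_eball _ _)).isPreconnected hre
    ?_ hz
  exact (Complex.continuous_ofReal.tendsto _).eventually
    ((Metric.isOpen_eball.inter Metric.isOpen_eball).mem_nhds hre) |>.mono h

theorem AnalyticOnNhd.exists_complex_extension {f : ℝ → ℝ} {S : Set ℝ}
    (hf : AnalyticOnNhd ℝ f S) :
    ∃ V : Set ℂ, ∃ F : ℂ → ℂ, IsOpen V ∧ (∀ t ∈ S, (t : ℂ) ∈ V) ∧ AnalyticOnNhd ℂ F V ∧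
      ∀ t ∈ S, F t = f t := by
  have hloc (x : S) : ∃ r : ℝ≥0∞, 0 < r ∧ ∃ F : ℂ → ℂ,
      AnalyticOnNhd ℂ F (Metric.eball ((x : ℝ) : ℂ) r) ∧
        ∀ s : ℝ, (s : ℂ) ∈ Metric.eball ((x : ℝ) : ℂ) r → F s = f s := by
    obtain ⟨p, r, hp⟩ := hf x x.2
    exact ⟨r, hp.r_pos, hp.exists_complex_extension⟩
  choose r hr F hF hFf using hloc
  classical
  let ball (x : S) : Set ℂ := Metric.eball ((x : ℝ) : ℂ) (r x)
  have hcenter (x : S) : ((x : ℝ) : ℂ) ∈ ball x := Metric.mem_eball_self (hr x)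
  let glued (z : ℂ) : ℂ := if h : ∃ x, z ∈ ball x then F h.choose z else 0
  have hglued (x : S) : EqOn glued (F x) (ball x) := fun z hz => by
    have h : ∃ x, z ∈ ball x := ⟨x, hz⟩
    simp only [glued, dif_pos h]
    exact eqOn_inter_eball_of_ofReal_eq (hF _) (hF x)
      (fun s hs => (hFf _ s hs.1).trans (hFf x s hs.2).symm) ⟨h.choose_spec, hz⟩
  refine ⟨⋃ x, ball x, glued, isOpen_iUnion fun _ => Metric.isOpen_eball,
    fun t ht => mem_iUnion.2 ⟨⟨t, ht⟩, hcenter _⟩, fun z hz => ?_,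
    fun t ht => (hglued ⟨t, ht⟩ (hcenter _)).trans (hFf _ t (hcenter _))⟩
  obtain ⟨x, hx⟩ := mem_iUnion.1 hz
  exact (hF x z hx).congr
    (eventually_of_mem (Metric.isOpen_eball.mem_nhds hx) fun w hw => (hglued x hw).symm)

/-- The point `(z, h₁ z, …, h_k z, g₁ z, …, g_r z)` at which `AlgDepOn` and `CAlgDepOn`
evaluate their polynomials. -/
def graphPoint {R : Type*} {k r : ℕ} (h : Fin k → R → R) (g : Fin r → R → R) (z : R) :
    Fin (k + 1 + r) → R :=
  Fin.append (Fin.cons z fun j => h j z) fun j => g j z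

section GraphPoint

variable {k r : ℕ}

theorem graphPoint_ofReal {H : Fin k → ℂ → ℂ} {G : Fin r → ℂ → ℂ} {h : Fin k → ℝ → ℝ}
    {g : Fin r → ℝ → ℝ} {t : ℝ} (hH : ∀ j, H j t = h j t) (hG : ∀ j, G j t = g j t) :
    graphPoint H G t = fun i => ((graphPoint h g t i : ℝ) : ℂ) := by
  funext i
  refine Fin.addCases (fun j => ?_) (fun j => ?_) i
  · refine Fin.cases ?_ (fun j => ?_) j <;> simp [graphPoint, hH]
  · simp [graphPoint, hG]

theorem AnalyticOnNhd.graphPoint {𝕜 : Type*} [NontriviallyNormedField 𝕜]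
    {H : Fin k → 𝕜 → 𝕜} {G : Fin r → 𝕜 → 𝕜} {V : Set 𝕜} (hH : ∀ j, AnalyticOnNhd 𝕜 (H j) V)
    (hG : ∀ j, AnalyticOnNhd 𝕜 (G j) V) (i : Fin (k + 1 + r)) :
    AnalyticOnNhd 𝕜 (fun z => graphPoint H G z i) V := by
  refine Fin.addCases (fun j => ?_) (fun j => ?_) i
  · refine Fin.cases ?_ (fun j => ?_) j
    · simpa [_root_.graphPoint] using analyticOnNhd_id
    · simpa [_root_.graphPoint] using hH j
  · simpa [_root_.graphPoint] using hG j

theorem CAlgDepOn.of_algDepOn {V : Set ℂ} (hV : IsPreconnected V) {S : Set ℝ}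
    (hS : (interior S).Nonempty) (hSV : ∀ t ∈ S, (t : ℂ) ∈ V) {H : Fin k → ℂ → ℂ}
    {G : Fin r → ℂ → ℂ} (hH : ∀ j, AnalyticOnNhd ℂ (H j) V)
    (hG : ∀ j, AnalyticOnNhd ℂ (G j) V) {h : Fin k → ℝ → ℝ} {g : Fin r → ℝ → ℝ}
    (hHh : ∀ j, ∀ t ∈ S, H j t = h j t) (hGg : ∀ j, ∀ t ∈ S, G j t = g j t)
    (hdep : AlgDepOn S h g) : CAlgDepOn V H G := by
  obtain ⟨P, hP, hPS⟩ := hdep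
  obtain ⟨t₀, ht₀⟩ := hS
  refine ⟨map Complex.ofRealHom P,
    ((map_injective _ Complex.ofReal_injective).ne_iff' (map_zero _)).2 hP, ?_⟩
  have hzero : ∀ t ∈ S, eval (graphPoint H G t) (map Complex.ofRealHom P) = 0 := by
    intro t ht
    rw [graphPoint_ofReal (fun j => hHh j t ht) (fun j => hGg j t ht), eval_map_ofRealHom]
    exact_mod_cast hPS t ht
  exact (AnalyticOnNhd.aeval_mvPolynomial (AnalyticOnNhd.graphPoint hH hG) _)
    |>.eqOn_of_preconnected_of_eventually_ofReal_eq analyticOnNhd_const hV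
      (hSV t₀ (interior_subset ht₀)) (eventually_of_mem (mem_interior_iff_mem_nhds.1 ht₀) hzero)

theorem AlgDepOn.of_cAlgDepOn {V : Set ℂ} {S : Set ℝ} (hSV : ∀ t ∈ S, (t : ℂ) ∈ V)
    {H : Fin k → ℂ → ℂ} {G : Fin r → ℂ → ℂ} {h : Fin k → ℝ → ℝ} {g : Fin r → ℝ → ℝ}
    (hHh : ∀ j, ∀ t ∈ S, H j t = h j t) (hGg : ∀ j, ∀ t ∈ S, G j t = g j t)
    (hdep : CAlgDepOn V H G) : AlgDepOn S h g := by
  obtain ⟨P, hP, hPV⟩ := hdep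
  obtain ⟨Q, hQ, hQS⟩ := exists_ne_zero_eval_eq_zero_of_ofReal (s := graphPoint h g '' S) hP
    (by
      rintro _ ⟨t, ht, rfl⟩
      rw [← graphPoint_ofReal (fun j => hHh j t ht) (fun j => hGg j t ht)]
      exact hPV t (hSV t ht))
  exact ⟨Q, hQ, fun t ht => hQS _ ⟨t, ht, rfl⟩⟩

end GraphPoint

theorem IsOpen.exists_isConnected_subset_superset {X : Type*} [TopologicalSpace X]
    [LocallyConnectedSpace X] {W K : Set X} (hW : IsOpen W) (hK : IsPreconnected K)
    (hKne : K.Nonempty) (hKW : K ⊆ W) : ∃ V ⊆ W, IsOpen V ∧ IsConnected V ∧ K ⊆ V := by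
  obtain ⟨x, hx⟩ := hKne
  exact ⟨connectedComponentIn W x, connectedComponentIn_subset _ _, hW.connectedComponentIn,
    isConnected_connectedComponentIn_iff.2 (hKW hx), hK.subset_connectedComponentIn hx hKW⟩

theorem strongMinDichotomy_of_complex_general
    (U : Set ℂ) (hUo : IsOpen U)
    (I : Set ℝ) (a b : ℝ) (hab : a < b) (hI : I = Set.Ioo a b)
    (hIU : ∀ t ∈ I, (t : ℂ) ∈ U)
    (n : ℕ)
    (G : ℂ → ℂ) (hG : DifferentiableOn ℂ G U)
    (hreal : ∀ t ∈ I, (G (t : ℂ)).im = 0)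
    (hdich : ∀ V : Set ℂ, IsOpen V → IsConnected V → V ⊆ U → (∀ t ∈ I, (t : ℂ) ∈ V) →
      ∀ (k : ℕ) (h : Fin k → ℂ → ℂ), (∀ i, DifferentiableOn ℂ (h i) V) →
        (∀ i, CAlgebraicOver V h (deriv (h i))) →
        (¬ CAlgDepOn V h fun j : Fin n => deriv^[(j : ℕ)] G) ∨ CAlgebraicOver V h G) :
    StrongMinDichotomy I n (fun t => (G (t : ℂ)).re) := by
  subst hI
  intro k h hh hh'
  choose W H hWo hIW hH hHh using fun i => (hh i).exists_complex_extension
  obtain ⟨V, hVW, hVo, hVc, hIV⟩ :=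
    (hUo.inter (isOpen_iInter_of_finite hWo)).exists_isConnected_subset_superset
      (isPreconnected_Ioo.image _ Complex.continuous_ofReal.continuousOn)
      ((nonempty_Ioo.2 hab).image _)
      (by rintro _ ⟨t, ht, rfl⟩; exact ⟨hIU t ht, mem_iInter.2 fun i => hIW i t ht⟩)
  replace hIV : ∀ t ∈ Ioo a b, (t : ℂ) ∈ V := fun t ht => hIV ⟨t, ht, rfl⟩
  have hHV (i) : AnalyticOnNhd ℂ (H i) V :=
    (hH i).mono (hVW.trans (inter_subset_right.trans (iInter_subset _ i)))
  have hGV : AnalyticOnNhd ℂ G V := (hG.analyticOnNhd hUo).mono (hVW.trans inter_subset_left)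
  have hIint : (interior (Ioo a b)).Nonempty := by rwa [interior_Ioo, nonempty_Ioo]
  have hGg (j : ℕ) := iterate_deriv_eq_ofReal_iterate_deriv (hG.analyticOnNhd hUo) isOpen_Ioo hIU
    (fun t ht => Complex.ext rfl (by simpa using hreal t ht)) j
  have hHh' (i) : ∀ j : Fin 1, ∀ t ∈ Ioo a b, ![deriv (H i)] j t = ![deriv (h i)] j t :=
    Fin.forall_fin_one.2 (iterate_deriv_eq_ofReal_iterate_deriv (hH i) isOpen_Ioo (hIW i) (hHh i) 1)
  rcases hdich V hVo hVc (hVW.trans inter_subset_left) hIV k H (fun i => (hHV i).differentiableOn)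
      (fun i => .of_algDepOn hVc.isPreconnected hIint hIV hHV (Fin.forall_fin_one.2 (hHV i).deriv)
        hHh (hHh' i) (hh' i)) with hind | halg
  · exact .inl fun hdep => hind (.of_algDepOn hVc.isPreconnected hIint hIV hHV
      (fun j => hGV.iterated_deriv j) hHh (fun j => hGg j) hdep)
  · exact .inr (.of_cAlgDepOn hIV hHh (Fin.forall_fin_one.2 (hGg 0)) halg)

/-- Complex-to-real transfer: if the holomorphic function `G`, real-valued on the
nonempty open interval `I ⊆ U ∩ ℝ`, satisfies the strong-minimality dichotomy of
order `n ≥ 1` over `ℂ` on every connected open `V` with `I ⊆ V ⊆ U`, then its real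
restriction satisfies the strong-minimality dichotomy of order `n` on `I`. -/
theorem strongMinDichotomy_of_complex
    (U : Set ℂ) (hUo : IsOpen U) (hUc : IsConnected U)
    (I : Set ℝ) (a b : ℝ) (hab : a < b) (hI : I = Set.Ioo a b)
    (hIU : ∀ t ∈ I, (t : ℂ) ∈ U)
    (n : ℕ) (hn : 1 ≤ n)
    (G : ℂ → ℂ) (hG : DifferentiableOn ℂ G U)
    (hreal : ∀ t ∈ I, (G (t : ℂ)).im = 0)
    (hdich : ∀ V : Set ℂ, IsOpen V → IsConnected V → V ⊆ U → (∀ t ∈ I, (t : ℂ) ∈ V) →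
      ∀ (k : ℕ) (h : Fin k → ℂ → ℂ), (∀ i, DifferentiableOn ℂ (h i) V) →
        (∀ i, CAlgebraicOver V h (deriv (h i))) →
        (¬ CAlgDepOn V h fun j : Fin n => deriv^[(j : ℕ)] G) ∨ CAlgebraicOver V h G) :
    StrongMinDichotomy I n (fun t => (G (t : ℂ)).re) :=
  strongMinDichotomy_of_complex_general U hUo I a b hab hI hIU n G hG hreal hdich
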